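/- Assume every capacity c'_k is an integer power of 2 with c'_k ≥ 1, and d_j ≤ 1 for every job j. For i ≥ 0 let J^(i) be the set of jobs whose bottleneck capacity with respect to (c'_k) equals 2^i. Suppose J admits a Round-SAP packing into K rounds under (c'_k) in which no rectangle is sliced by a horizontal line at an integer power of 2 (there is no job j and integer t ≥ 0 with h_j < 2^t < h_j + d_j). Then J^(0) admits a Round-SAP packing into K rounds in which every edge has capacity 1, and for each i ≥ 1, J^(i) admits a Round-SAP packing into 2K rounds in which every edge has capacity 2^{i−1}. -/
import Mathlib


open scoped Classical

namespace PathSAP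

variable {ι : Type*}

/-- Job `i` uses the edge `e_{k+1}` (for `k : Fin m`, edges being 1-indexed
`e_1, …, e_m`) iff `s_i < k + 1 ≤ t_i`, i.e. iff `s_i ≤ k < t_i`. -/
def uses (s t : ι → ℕ) {m : ℕ} (i : ι) (k : Fin m) : Prop :=
  s i ≤ (k : ℕ) ∧ (k : ℕ) < t i

/-- The open rectangle `(s_i, t_i) × (h_i, h_i + d_i)` of job `i` drawn at height `h i`. -/
def rect (s t : ι → ℕ) (d h : ι → ℝ) (i : ι) : Set (ℝ × ℝ) :=
  Set.Ioo (s i : ℝ) (t i : ℝ) ×ˢ Set.Ioo (h i) (h i + d i)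

/-- The bottleneck capacity of job `i` (the minimum capacity among the edges it uses)
equals `v`: every edge used by `i` has capacity at least `v`, and some edge used by `i`
has capacity exactly `v`. -/
def BottleneckEq (s t : ι → ℕ) {m : ℕ} (c : Fin m → ℝ) (i : ι) (v : ℝ) : Prop :=
  (∀ k : Fin m, uses s t i k → v ≤ c k) ∧ (∃ k : Fin m, uses s t i k ∧ c k = v)

/-- The jobs satisfying `P` admit a Round-SAP packing into `K` rounds under the edge
capacities `c`: there are a round assignment and nonnegative heights such that each job
(satisfying `P`) fits below the capacity of each edge it uses, and rectangles of
distinct jobs (satisfying `P`) placed in the same round are disjoint. -/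
def SAPPackingOn (s t : ι → ℕ) (d : ι → ℝ) (P : ι → Prop) (K : ℕ) {m : ℕ}
    (c : Fin m → ℝ) : Prop :=
  ∃ (f : ι → Fin K) (h : ι → ℝ),
    (∀ i, P i → 0 ≤ h i) ∧
    (∀ i, P i → ∀ k : Fin m, uses s t i k → h i + d i ≤ c k) ∧
    (∀ i j, P i → P j → i ≠ j → f i = f j →
      Disjoint (rect s t d h i) (rect s t d h j))


/-- `(f, h)` is a Round-SAP packing of all the jobs into `K` rounds under the edge
capacities `c`. -/
def IsSAPPacking (s t : ι → ℕ) (d : ι → ℝ) {m : ℕ} (c : Fin m → ℝ)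
    {K : ℕ} (f : ι → Fin K) (h : ι → ℝ) : Prop :=
  (∀ i, 0 ≤ h i) ∧
  (∀ i (k : Fin m), uses s t i k → h i + d i ≤ c k) ∧
  (∀ i j, i ≠ j → f i = f j → Disjoint (rect s t d h i) (rect s t d h j))

end PathSAP

open PathSAP in
/-- Assume every capacity `c'_k` is an integer power of 2 with
`c'_k ≥ 1`, and `d_j ≤ 1` for every job. For `i ≥ 0` let `J^(i)` be the set of jobs
whose bottleneck capacity w.r.t. `(c'_k)` equals `2^i`. Suppose `J` admits a Round-SAP
packing into `K` rounds under `(c'_k)` in which no rectangle is sliced by a horizontal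
line at an integer power of 2 (there is no job `j` and integer `τ ≥ 0` with
`h_j < 2^τ < h_j + d_j`). Then `J^(0)` admits a Round-SAP packing into `K` rounds in
which every edge has capacity 1, and for each `i ≥ 1`, `J^(i)` admits a Round-SAP
packing into `2K` rounds in which every edge has capacity `2^{i−1}`. -/
theorem sap_split_by_bottleneck_levels {ι : Type*} [Fintype ι] {m : ℕ}
    (c' : Fin m → ℝ) (hpow : ∀ k, ∃ e : ℕ, c' k = 2 ^ e)
    (s t : ι → ℕ) (d : ι → ℝ)
    (hst : ∀ i, s i < t i) (htm : ∀ i, t i ≤ m)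
    (hd0 : ∀ i, 0 < d i) (hd1 : ∀ i, d i ≤ 1)
    (K : ℕ) (f : ι → Fin K) (h : ι → ℝ)
    (hpack : IsSAPPacking s t d c' f h)
    (hnoslice : ∀ i, ¬ ∃ τ : ℕ, h i < 2 ^ τ ∧ ((2 : ℝ) ^ τ) < h i + d i) :
    SAPPackingOn s t d (fun i => BottleneckEq s t c' i 1) K (fun _ : Fin m => (1 : ℝ)) ∧
    ∀ lvl : ℕ, 1 ≤ lvl →
      SAPPackingOn s t d (fun i => BottleneckEq s t c' i (2 ^ lvl)) (2 * K)
        (fun _ : Fin m => (2 : ℝ) ^ (lvl - 1)) := by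

  obtain ⟨hh0, hcap, hdisj⟩ := hpack
  refine ⟨?_, ?_⟩
  · refine ⟨f, h, fun i _ => hh0 i, ?_, fun i j _ _ hij hf => hdisj i j hij hf⟩
    intro i hi k hk
    obtain ⟨k0, hu0, hc0⟩ := hi.2
    have := hcap i k0 hu0
    rw [hc0] at this
    exact this
  · intro lvl hlvl
    set δ : ℝ := 2 ^ (lvl - 1) with hδ
    have h2 : (2 : ℝ) ^ lvl = δ + δ := by
      have e : lvl - 1 + 1 = lvl := Nat.succ_pred_eq_of_pos hlvl
      rw [hδ, show δ + δ = 2 ^ (lvl - 1) * 2 by rw [hδ]; ring, ← pow_succ, e]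
    have hδ0 : (0 : ℝ) ≤ δ := by positivity
    have hKle : ∀ i : ι, (f i : ℕ) < 2 * K := fun i => by have := (f i).2; omega
    have hKle2 : ∀ i : ι, K + (f i : ℕ) < 2 * K := fun i => by have := (f i).2; omega
    set f' : ι → Fin (2 * K) :=
      fun i => if h i + d i ≤ δ then ⟨f i, hKle i⟩ else ⟨K + f i, hKle2 i⟩ with hf'
    set h' : ι → ℝ := fun i => if h i + d i ≤ δ then h i else h i - δ with hh'
    have hh'lo : ∀ i, h i + d i ≤ δ → h' i = h i := fun i hc => by simp [hh', hc]
    have hh'hi : ∀ i, ¬ (h i + d i ≤ δ) → h' i = h i - δ := fun i hc => by simp [hh', hc]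
    have hub : ∀ i, BottleneckEq s t c' i (2 ^ lvl) → h i + d i ≤ 2 ^ lvl := by
      intro i hi
      obtain ⟨k0, hu0, hc0⟩ := hi.2
      have := hcap i k0 hu0
      rw [hc0] at this
      exact this
    have hlo : ∀ i, ¬ (h i + d i ≤ δ) → δ ≤ h i := by
      intro i hno
      by_contra hlt
      exact hnoslice i ⟨lvl - 1, by rw [← hδ]; exact not_le.mp hlt,
        by rw [← hδ]; exact not_le.mp hno⟩
    refine ⟨f', h', ?_, ?_, ?_⟩
    · intro i hi
      by_cases hc : h i + d i ≤ δ
      · rw [hh'lo i hc]; exact hh0 i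
      · rw [hh'hi i hc]; linarith [hlo i hc]
    · intro i hi k hk
      by_cases hc : h i + d i ≤ δ
      · rw [hh'lo i hc]; exact hc
      · rw [hh'hi i hc]; have := hub i hi; linarith
    · intro i j hi hj hij hfe
      by_cases hci : h i + d i ≤ δ <;> by_cases hcj : h j + d j ≤ δ
      · have hv : (f' i : ℕ) = f i := by simp [hf', hci]
        have hv' : (f' j : ℕ) = f j := by simp [hf', hcj]
        have hff : f i = f j := by
          apply Fin.ext
          have := congrArg Fin.val hfe
          rw [hv, hv'] at this
          exact this
        have := hdisj i j hij hff
        simpa only [rect, hh'lo i hci, hh'lo j hcj] using this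
      · exfalso
        have hv : (f' i : ℕ) = f i := by simp [hf', hci]
        have hv' : (f' j : ℕ) = K + f j := by simp [hf', hcj]
        have := congrArg Fin.val hfe
        rw [hv, hv'] at this
        have := (f i).2
        omega
      · exfalso
        have hv : (f' i : ℕ) = K + f i := by simp [hf', hci]
        have hv' : (f' j : ℕ) = f j := by simp [hf', hcj]
        have := congrArg Fin.val hfe
        rw [hv, hv'] at this
        have := (f j).2
        omega
      · have hv : (f' i : ℕ) = K + f i := by simp [hf', hci]
        have hv' : (f' j : ℕ) = K + f j := by simp [hf', hcj]
        have hff : f i = f j := by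
          apply Fin.ext
          have := congrArg Fin.val hfe
          rw [hv, hv'] at this
          omega
        have hd := hdisj i j hij hff
        rw [Set.disjoint_left] at hd ⊢
        intro x hx hx'
        simp only [rect, Set.mem_prod, Set.mem_Ioo, hh'hi i hci, hh'hi j hcj] at hx hx'
        have hxi : (x.1, x.2 + δ) ∈ rect s t d h i := by
          simp only [rect, Set.mem_prod, Set.mem_Ioo]
          exact ⟨hx.1, by constructor <;> [linarith [hx.2.1]; linarith [hx.2.2]]⟩
        have hxj : (x.1, x.2 + δ) ∈ rect s t d h j := by
          simp only [rect, Set.mem_prod, Set.mem_Ioo]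
          exact ⟨hx'.1, by constructor <;> [linarith [hx'.2.1]; linarith [hx'.2.2]]⟩
        exact hd hxi hxj
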